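/- arXiv:2402.04823 — 4 statements merged into one kernel-verified Lean document; each statement's English description precedes it below -/
import Mathlib

section
/- Let Π be a satisfiable finite set of linear constraints over ℝ^D, with variables taken in the order x_1, …, x_D, and let x̃ ∈ ℝ^D be a point that satisfies Π. Then CL(x̃) = x̃, and CL(x̃) is optimal for x̃ with respect to Π. -/
open scoped BigOperators

/-- A linear constraint `∑ k, w k * x k + b ⊵ 0` over `ℝ^D`; `⊵` is `>` when
`strict = true` and `≥` when `strict = false`. -/
structure LinConstr (D : ℕ) where
  w : Fin D → ℝ
  b : ℝ
  strict : Bool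

namespace LinConstr

variable {D : ℕ}

/-- `x` satisfies the linear constraint `φ`. -/
def Sat (φ : LinConstr D) (x : Fin D → ℝ) : Prop :=
  if φ.strict then 0 < (∑ k, φ.w k * x k) + φ.b
  else 0 ≤ (∑ k, φ.w k * x k) + φ.b

/-- `x` satisfies every constraint in the set `Γ`. -/
def SatSet (Γ : Set (LinConstr D)) (x : Fin D → ℝ) : Prop :=
  ∀ φ ∈ Γ, φ.Sat x

/-- The reduction `red_j(φ1, φ2)` of `φ1` (where `x_j` appears negatively) and
`φ2` (where `x_j` appears positively) over the variable `x_j`. -/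
def red (j : Fin D) (φ1 φ2 : LinConstr D) : LinConstr D where
  w := fun k => if k = j then 0 else φ1.w k * |φ2.w j| + φ2.w k * |φ1.w j|
  b := φ1.b * |φ2.w j| + φ2.b * |φ1.w j|
  strict := φ1.strict || φ2.strict

/-- `ε^φ_j(x) = −∑_{k≠j} (w_k/w_j)·x_k − b/w_j`. -/
noncomputable def eps (φ : LinConstr D) (j : Fin D) (x : Fin D → ℝ) : ℝ :=
  -(∑ k ∈ Finset.univ.erase j, (φ.w k / φ.w j) * x k) - φ.b / φ.w j

/-- The constraints of `S` in which `x_j` appears negatively. -/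
def negSet (j : Fin D) (S : Set (LinConstr D)) : Set (LinConstr D) :=
  {φ ∈ S | φ.w j < 0}

/-- The constraints of `S` in which `x_j` appears positively. -/
def posSet (j : Fin D) (S : Set (LinConstr D)) : Set (LinConstr D) :=
  {φ ∈ S | 0 < φ.w j}

/-- Elimination of the variable `x_j` from the set `S` (Fourier–Motzkin step). -/
def elim (j : Fin D) (S : Set (LinConstr D)) : Set (LinConstr D) :=
  (S \ (negSet j S ∪ posSet j S)) ∪
    {ψ | ∃ φ1 ∈ negSet j S, ∃ φ2 ∈ posSet j S, ψ = red j φ1 φ2}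

/-- `PiAt Γ i` is the paper's `Π_{i+1}` (0-based indexing of the coordinates):
`PiAt Γ (D−1) = Γ` and `PiAt Γ i = elim_{x_{i+1}} (PiAt Γ (i+1))`. -/
def PiAt (Γ : Set (LinConstr D)) (i : ℕ) : Set (LinConstr D) :=
  if h : i + 1 < D then elim ⟨i + 1, h⟩ (PiAt Γ (i + 1)) else Γ
termination_by D - i
decreasing_by omega

/-- The least upper bound `ub_i = min {ε^φ_i(x) : φ ∈ S⁻_i}` (`+∞` if empty). -/
noncomputable def ubE (S : Set (LinConstr D)) (i : Fin D) (x : Fin D → ℝ) : EReal :=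
  sInf ((fun φ => ((eps φ i x : ℝ) : EReal)) '' negSet i S)

/-- The greatest lower bound `lb_i = max {ε^φ_i(x) : φ ∈ S⁺_i}` (`−∞` if empty). -/
noncomputable def lbE (S : Set (LinConstr D)) (i : Fin D) (x : Fin D → ℝ) : EReal :=
  sSup ((fun φ => ((eps φ i x : ℝ) : EReal)) '' posSet i S)

/-- Some strict constraint of `S` attains the value `v` at `x` (via `ε^φ_i`). -/
def StrictHit (S : Set (LinConstr D)) (i : Fin D) (x : Fin D → ℝ) (v : EReal) : Prop :=
  ∃ φ ∈ S, φ.strict = true ∧ ((eps φ i x : ℝ) : EReal) = v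

/-- The `max^i`-style adjustment: `r = v` unless a strict constraint attains `v`
(`hit`), in which case `r = v + e` for the chosen `e > 0` with `L + e ≤ U`. -/
def AdjUp (hit : Prop) (v L U : EReal) (e : ℝ) (r : EReal) : Prop :=
  (¬ hit ∧ e = 0 ∧ r = v) ∨
  (hit ∧ 0 < e ∧ L + (e : EReal) ≤ U ∧ r = v + (e : EReal))

/-- The `min^i`-style adjustment: `r = v` unless a strict constraint attains `v`
(`hit`), in which case `r = v − e` for the chosen `e > 0` with `L ≤ U − e`. -/
def AdjDown (hit : Prop) (v L U : EReal) (e : ℝ) (r : EReal) : Prop :=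
  (¬ hit ∧ e = 0 ∧ r = v) ∨
  (hit ∧ 0 < e ∧ L ≤ U - (e : EReal) ∧ r = v - (e : EReal))

/-- The `i`-th step of the constraint-layer computation, with the `ε` values
`e1` (for `max^i`) and `e2` (for `min^i`) made explicit:
`z_i = min^i(max^i(x̃_i, lb_i), ub_i)`, where the bounds are computed from
`Π_i = PiAt Γ i` at the (previously computed) coordinates of `z`. -/
def IsCLStepE (Γ : Set (LinConstr D)) (xt z : Fin D → ℝ) (e1 e2 : ℝ) (i : Fin D) : Prop :=
  ∃ a : EReal,
    AdjUp (StrictHit (posSet i (PiAt Γ i.1)) i z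
        (max ((xt i : ℝ) : EReal) (lbE (PiAt Γ i.1) i z)))
      (max ((xt i : ℝ) : EReal) (lbE (PiAt Γ i.1) i z))
      (lbE (PiAt Γ i.1) i z) (ubE (PiAt Γ i.1) i z) e1 a ∧
    AdjDown (StrictHit (negSet i (PiAt Γ i.1)) i z (min a (ubE (PiAt Γ i.1) i z)))
      (min a (ubE (PiAt Γ i.1) i z))
      (lbE (PiAt Γ i.1) i z) (ubE (PiAt Γ i.1) i z) e2 ((z i : ℝ) : EReal)

/-- `z` is the output of the constraint layer on input `xt` for the explicit
admissible choice `ε₁, ε₂` of the `ε` values. -/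
def IsCLE (Γ : Set (LinConstr D)) (xt z : Fin D → ℝ) (ε₁ ε₂ : Fin D → ℝ) : Prop :=
  ∀ i : Fin D, IsCLStepE Γ xt z (ε₁ i) (ε₂ i) i

/-- `z = CL(xt)` for some admissible choice of the `ε` values. -/
def IsCL (Γ : Set (LinConstr D)) (xt z : Fin D → ℝ) : Prop :=
  ∃ ε₁ ε₂ : Fin D → ℝ, IsCLE Γ xt z ε₁ ε₂

/-- The `i`-th step holds for some admissible `ε` values. -/
def IsCLStep (Γ : Set (LinConstr D)) (xt z : Fin D → ℝ) (i : Fin D) : Prop :=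
  ∃ e1 e2 : ℝ, IsCLStepE Γ xt z e1 e2 i

/-- `z` is optimal for `xt` with respect to `Γ`. -/
def Optimal (Γ : Set (LinConstr D)) (xt z : Fin D → ℝ) : Prop :=
  SatSet Γ z ∧
    ¬ ∃ x' : Fin D → ℝ, x' ≠ z ∧ SatSet Γ x' ∧ ∀ i, |x' i - xt i| ≤ |z i - xt i|

/-- Replace a (possibly strict) constraint by its non-strict version. -/
def toGe (φ : LinConstr D) : LinConstr D := { φ with strict := false }

/-- `Π^≥`: every strict constraint replaced by its non-strict version. -/
def PiGe (Γ : Set (LinConstr D)) : Set (LinConstr D) := toGe '' Γ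

/-- The deterministic constraint layer in the absence of strict constraints:
`CLns Γ xt i = min(max(xt_i, lb_i), ub_i)`, the bounds being computed from
`PiAt Γ i` at the previously computed coordinates. -/
noncomputable def CLns (Γ : Set (LinConstr D)) (xt : Fin D → ℝ) (i : Fin D) : ℝ :=
  (min (max ((xt i : ℝ) : EReal)
        (lbE (PiAt Γ i.1) i (fun k => if h : (k : ℕ) < (i : ℕ) then CLns Γ xt k else 0)))
      (ubE (PiAt Γ i.1) i (fun k => if h : (k : ℕ) < (i : ℕ) then CLns Γ xt k else 0))).toReal
termination_by (i : ℕ)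
decreasing_by all_goals exact h

end LinConstr

open LinConstr

namespace LinConstrAux

open LinConstr

variable {D : ℕ}

lemma sat_nonneg {φ : LinConstr D} {x : Fin D → ℝ} (hs : φ.Sat x) :
    0 ≤ (∑ k, φ.w k * x k) + φ.b := by
  unfold LinConstr.Sat at hs
  split at hs
  · exact hs.le
  · exact hs

lemma sat_pos {φ : LinConstr D} {x : Fin D → ℝ} (hst : φ.strict = true) (hs : φ.Sat x) :
    0 < (∑ k, φ.w k * x k) + φ.b := by
  unfold LinConstr.Sat at hs
  rw [hst] at hs
  simpa using hs

lemma eps_eq_div (φ : LinConstr D) (i : Fin D) (x : Fin D → ℝ) :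
    eps φ i x = (-(∑ k ∈ Finset.univ.erase i, φ.w k * x k) - φ.b) / φ.w i := by
  rw [LinConstr.eps, sub_div, neg_div, Finset.sum_div]
  congr 2
  exact Finset.sum_congr rfl fun k _ => by ring

lemma sum_erase_add' (φ : LinConstr D) (i : Fin D) (x : Fin D → ℝ) :
    (∑ k ∈ Finset.univ.erase i, φ.w k * x k) + φ.w i * x i = ∑ k, φ.w k * x k :=
  Finset.sum_erase_add Finset.univ _ (Finset.mem_univ i)

lemma eps_le_pos {φ : LinConstr D} {i : Fin D} {x : Fin D → ℝ}
    (hw : 0 < φ.w i) (hval : 0 ≤ (∑ k, φ.w k * x k) + φ.b) : eps φ i x ≤ x i := by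
  rw [eps_eq_div, div_le_iff₀ hw]
  linarith [sum_erase_add' φ i x, mul_comm (x i) (φ.w i)]

lemma eps_lt_pos {φ : LinConstr D} {i : Fin D} {x : Fin D → ℝ}
    (hw : 0 < φ.w i) (hval : 0 < (∑ k, φ.w k * x k) + φ.b) : eps φ i x < x i := by
  rw [eps_eq_div, div_lt_iff₀ hw]
  linarith [sum_erase_add' φ i x, mul_comm (x i) (φ.w i)]

lemma le_eps_neg {φ : LinConstr D} {i : Fin D} {x : Fin D → ℝ}
    (hw : φ.w i < 0) (hval : 0 ≤ (∑ k, φ.w k * x k) + φ.b) : x i ≤ eps φ i x := by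
  rw [eps_eq_div, le_div_iff_of_neg hw]
  linarith [sum_erase_add' φ i x, mul_comm (x i) (φ.w i)]

lemma lt_eps_neg {φ : LinConstr D} {i : Fin D} {x : Fin D → ℝ}
    (hw : φ.w i < 0) (hval : 0 < (∑ k, φ.w k * x k) + φ.b) : x i < eps φ i x := by
  rw [eps_eq_div, lt_div_iff_of_neg hw]
  linarith [sum_erase_add' φ i x, mul_comm (x i) (φ.w i)]

lemma eps_congr {φ : LinConstr D} {i : Fin D} {x y : Fin D → ℝ}
    (hw : ∀ k : Fin D, (i : ℕ) < (k : ℕ) → φ.w k = 0)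
    (hxy : ∀ k : Fin D, (k : ℕ) < (i : ℕ) → x k = y k) :
    eps φ i x = eps φ i y := by
  unfold LinConstr.eps
  have hsum : ∀ k ∈ Finset.univ.erase i,
      (φ.w k / φ.w i) * x k = (φ.w k / φ.w i) * y k := by
    intro k hk
    have hki : k ≠ i := Finset.ne_of_mem_erase hk
    rcases lt_trichotomy ((k : ℕ)) ((i : ℕ)) with hlt | heq | hgt
    · rw [hxy k hlt]
    · exact absurd (Fin.ext heq) hki
    · rw [hw k hgt]; simp
  rw [Finset.sum_congr rfl hsum]

lemma sat_red {φ1 φ2 : LinConstr D} {j : Fin D} (h1 : φ1.w j < 0) (h2 : 0 < φ2.w j)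
    {x : Fin D → ℝ} (hs1 : φ1.Sat x) (hs2 : φ2.Sat x) : (red j φ1 φ2).Sat x := by
  have a1 : 0 < |φ1.w j| := abs_pos.mpr h1.ne
  have a2 : 0 < |φ2.w j| := abs_pos.mpr h2.ne'
  have key : (∑ k, (red j φ1 φ2).w k * x k) + (red j φ1 φ2).b
      = ((∑ k, φ1.w k * x k) + φ1.b) * |φ2.w j|
        + ((∑ k, φ2.w k * x k) + φ2.b) * |φ1.w j| := by
    show (∑ k, (if k = j then 0 else φ1.w k * |φ2.w j| + φ2.w k * |φ1.w j|) * x k)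
        + (φ1.b * |φ2.w j| + φ2.b * |φ1.w j|) = _
    have e0 : ∀ k : Fin D,
        (if k = j then 0 else φ1.w k * |φ2.w j| + φ2.w k * |φ1.w j|) * x k
          = (φ1.w k * x k) * |φ2.w j| + (φ2.w k * x k) * |φ1.w j| := by
      intro k
      by_cases hk : k = j
      · subst hk
        rw [if_pos rfl, abs_of_pos h2, abs_of_neg h1]
        ring
      · rw [if_neg hk]; ring
    rw [Finset.sum_congr rfl (fun k _ => e0 k), Finset.sum_add_distrib,
      ← Finset.sum_mul, ← Finset.sum_mul]
    ring
  have hA : 0 ≤ (∑ k, φ1.w k * x k) + φ1.b := sat_nonneg hs1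
  have hB : 0 ≤ (∑ k, φ2.w k * x k) + φ2.b := sat_nonneg hs2
  unfold LinConstr.Sat
  have hstr : (red j φ1 φ2).strict = (φ1.strict || φ2.strict) := rfl
  rw [key, hstr]
  by_cases hb : (φ1.strict || φ2.strict) = true
  · rw [if_pos hb]
    rcases (by simpa using hb : φ1.strict = true ∨ φ2.strict = true) with hb1 | hb2
    · have hA' := sat_pos hb1 hs1
      nlinarith
    · have hB' := sat_pos hb2 hs2
      nlinarith
  · rw [if_neg hb]
    exact add_nonneg (mul_nonneg hA a2.le) (mul_nonneg hB a1.le)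

lemma satSet_elim {S : Set (LinConstr D)} {j : Fin D} {x : Fin D → ℝ}
    (hx : SatSet S x) : SatSet (elim j S) x := by
  intro φ hφ
  rcases hφ with hφ | ⟨φ1, h1, φ2, h2, rfl⟩
  · exact hx φ hφ.1
  · exact sat_red h1.2 h2.2 (hx φ1 h1.1) (hx φ2 h2.1)

lemma satSet_PiAt {Γ : Set (LinConstr D)} {x : Fin D → ℝ} (hx : SatSet Γ x) :
    ∀ i : ℕ, SatSet (PiAt Γ i) x
  | i => by
    by_cases h : i + 1 < D
    · rw [PiAt, dif_pos h]
      exact satSet_elim (satSet_PiAt hx (i + 1))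
    · rw [PiAt, dif_neg h]
      exact hx
termination_by i => D - i
decreasing_by omega

lemma w_zero_PiAt {Γ : Set (LinConstr D)} :
    ∀ i : ℕ, ∀ φ ∈ PiAt Γ i, ∀ k : Fin D, i < (k : ℕ) → φ.w k = 0
  | i => by
    intro φ hφ k hk
    by_cases h : i + 1 < D
    · rw [PiAt, dif_pos h] at hφ
      rcases hφ with ⟨hφS, hφn⟩ | ⟨φ1, h1, φ2, h2, rfl⟩
      · rcases Nat.lt_or_ge (i + 1) ((k : ℕ)) with hk' | hk'
        · exact w_zero_PiAt (i + 1) φ hφS k hk'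
        · have hkj : k = ⟨i + 1, h⟩ := Fin.ext (by show (k : ℕ) = i + 1; omega)
          subst hkj
          by_contra hne
          rcases lt_or_gt_of_ne hne with hlt | hgt
          · exact hφn (Or.inl ⟨hφS, hlt⟩)
          · exact hφn (Or.inr ⟨hφS, hgt⟩)
      · show (if k = ⟨i + 1, h⟩ then 0
            else φ1.w k * |φ2.w ⟨i + 1, h⟩| + φ2.w k * |φ1.w ⟨i + 1, h⟩|) = 0
        by_cases hkj : k = ⟨i + 1, h⟩
        · rw [if_pos hkj]
        · rw [if_neg hkj]
          have hk1 : i + 1 < (k : ℕ) := by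
            rcases Nat.lt_or_ge (i + 1) ((k : ℕ)) with h' | h'
            · exact h'
            · exact absurd (Fin.ext (by show (k : ℕ) = i + 1; omega) : k = ⟨i + 1, h⟩) hkj
          rw [w_zero_PiAt (i + 1) φ1 h1.1 k hk1, w_zero_PiAt (i + 1) φ2 h2.1 k hk1]
          ring
    · exact absurd hk (by have := k.2; omega)
termination_by i => D - i
decreasing_by all_goals omega

end LinConstrAux
/-- Theorem 3.2 of the paper. If `Γ` is a satisfiable finite set of
linear constraints and the input `x̃` already satisfies `Γ`, then `CL(x̃) = x̃` and
`CL(x̃)` is optimal for `x̃` with respect to `Γ`. -/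
theorem cl_id_on_sat {D : ℕ} (Γ : Set (LinConstr D)) (hfin : Γ.Finite)
    (hsat : ∃ x : Fin D → ℝ, SatSet Γ x) (xt : Fin D → ℝ) (hxt : SatSet Γ xt)
    (z : Fin D → ℝ) (h : IsCL Γ xt z) :
    z = xt ∧ Optimal Γ xt z := by
  obtain ⟨ε₁, ε₂, hcl⟩ := h
  have key : ∀ n : ℕ, ∀ i : Fin D, (i : ℕ) = n → z i = xt i := by
    intro n
    induction n using Nat.strong_induction_on with
    | _ n ih =>
      rintro i rfl
      have hprev : ∀ k : Fin D, (k : ℕ) < (i : ℕ) → z k = xt k :=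
        fun k hk => ih (k : ℕ) hk k rfl
      obtain ⟨a, hup, hdown⟩ := hcl i
      have hsatS : SatSet (PiAt Γ (i : ℕ)) xt := LinConstrAux.satSet_PiAt hxt (i : ℕ)
      have hepsz : ∀ φ ∈ PiAt Γ (i : ℕ), eps φ i z = eps φ i xt := fun φ hφ =>
        LinConstrAux.eps_congr (fun k hk => LinConstrAux.w_zero_PiAt (i : ℕ) φ hφ k hk) hprev
      have hlb : lbE (PiAt Γ (i : ℕ)) i z ≤ ((xt i : ℝ) : EReal) := by
        apply sSup_le
        rintro v ⟨φ, hφ, rfl⟩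
        show ((eps φ i z : ℝ) : EReal) ≤ ((xt i : ℝ) : EReal)
        rw [hepsz φ hφ.1]
        exact_mod_cast LinConstrAux.eps_le_pos hφ.2 (LinConstrAux.sat_nonneg (hsatS φ hφ.1))
      have hub : ((xt i : ℝ) : EReal) ≤ ubE (PiAt Γ (i : ℕ)) i z := by
        apply le_sInf
        rintro v ⟨φ, hφ, rfl⟩
        show ((xt i : ℝ) : EReal) ≤ ((eps φ i z : ℝ) : EReal)
        rw [hepsz φ hφ.1]
        exact_mod_cast LinConstrAux.le_eps_neg hφ.2 (LinConstrAux.sat_nonneg (hsatS φ hφ.1))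
      have hmax : max ((xt i : ℝ) : EReal) (lbE (PiAt Γ (i : ℕ)) i z) = ((xt i : ℝ) : EReal) :=
        max_eq_left hlb
      have hnopos : ¬ StrictHit (posSet i (PiAt Γ (i : ℕ))) i z ((xt i : ℝ) : EReal) := by
        rintro ⟨φ, hφ, hst, heq⟩
        rw [hepsz φ hφ.1] at heq
        have hlt := LinConstrAux.eps_lt_pos hφ.2 (LinConstrAux.sat_pos hst (hsatS φ hφ.1))
        rw [EReal.coe_eq_coe_iff] at heq
        linarith
      rw [hmax] at hup
      unfold AdjUp at hup
      rcases hup with ⟨_, _, ha⟩ | ⟨hhit, _, _, _⟩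
      · subst ha
        have hmin : min ((xt i : ℝ) : EReal) (ubE (PiAt Γ (i : ℕ)) i z)
            = ((xt i : ℝ) : EReal) := min_eq_left hub
        rw [hmin] at hdown
        have hnoneg : ¬ StrictHit (negSet i (PiAt Γ (i : ℕ))) i z ((xt i : ℝ) : EReal) := by
          rintro ⟨φ, hφ, hst, heq⟩
          rw [hepsz φ hφ.1] at heq
          have hlt := LinConstrAux.lt_eps_neg hφ.2 (LinConstrAux.sat_pos hst (hsatS φ hφ.1))
          rw [EReal.coe_eq_coe_iff] at heq
          linarith
        unfold AdjDown at hdown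
        rcases hdown with ⟨_, _, hz⟩ | ⟨hhit, _, _, _⟩
        · exact_mod_cast hz
        · exact absurd hhit hnoneg
      · exact absurd hhit hnopos
  have hz : z = xt := funext fun i => key (i : ℕ) i rfl
  refine ⟨hz, ?_, ?_⟩
  · rw [hz]; exact hxt
  · rintro ⟨x', hne, _, hle⟩
    apply hne
    funext i
    have h0 : |x' i - xt i| ≤ 0 := by
      have := hle i
      rw [hz] at this
      simpa using this
    have h1 : |x' i - xt i| = 0 := le_antisymm h0 (abs_nonneg _)
    have h2 : x' i - xt i = 0 := abs_eq_zero.mp h1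
    rw [hz]
    linarith
end

section
/- Let Π be a satisfiable finite set of linear constraints over ℝ^D, with variables taken in the order x_1, …, x_D, and let x̃ ∈ ℝ^D. Then CL^≥(x̃) is optimal for x̃ with respect to Π^≥; in particular, for every i = 1, …, D there is no point x' satisfying Π^≥ such that x'_j = CL^≥(x̃)_j for all j < i and |x'_i − x̃_i| < |CL^≥(x̃)_i − x̃_i|. -/
open scoped BigOperators

open LinConstr

namespace LinConstr
variable {D : ℕ}

lemma sat_nonstrict {φ : LinConstr D} (hs : φ.strict = false) {x : Fin D → ℝ} :
    φ.Sat x ↔ 0 ≤ (∑ k, φ.w k * x k) + φ.b := by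
  simp [Sat, hs]

lemma eps_key (φ : LinConstr D) (j : Fin D) (x : Fin D → ℝ) (hwj : φ.w j ≠ 0) :
    φ.w j * eps φ j x = -((∑ k ∈ Finset.univ.erase j, φ.w k * x k) + φ.b) := by
  have hsum : ∀ k ∈ Finset.univ.erase j, φ.w j * (φ.w k / φ.w j * x k) = φ.w k * x k := by
    intro k _
    field_simp
  unfold eps
  rw [mul_sub, mul_neg, Finset.mul_sum, mul_div_cancel₀ _ hwj, Finset.sum_congr rfl hsum]
  ring

lemma val_eq (φ : LinConstr D) (j : Fin D) (x : Fin D → ℝ) (hwj : φ.w j ≠ 0) :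
    (∑ k, φ.w k * x k) + φ.b = φ.w j * (x j - eps φ j x) := by
  have h := eps_key φ j x hwj
  rw [← Finset.sum_erase_add _ _ (Finset.mem_univ j)]
  rw [mul_sub] at *
  linarith

lemma sat_iff_le {φ : LinConstr D} (hs : φ.strict = false) {j : Fin D} (h : 0 < φ.w j)
    (x : Fin D → ℝ) : φ.Sat x ↔ eps φ j x ≤ x j := by
  rw [sat_nonstrict hs, val_eq φ j x h.ne']
  constructor
  · intro hh; nlinarith
  · intro hh; nlinarith

lemma sat_iff_ge {φ : LinConstr D} (hs : φ.strict = false) {j : Fin D} (h : φ.w j < 0)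
    (x : Fin D → ℝ) : φ.Sat x ↔ x j ≤ eps φ j x := by
  rw [sat_nonstrict hs, val_eq φ j x h.ne]
  constructor
  · intro hh; nlinarith
  · intro hh; nlinarith

lemma red_val {j : Fin D} {φ1 φ2 : LinConstr D} (h1 : φ1.w j < 0) (h2 : 0 < φ2.w j)
    (x : Fin D → ℝ) :
    (∑ k, (red j φ1 φ2).w k * x k) + (red j φ1 φ2).b
      = ((-φ1.w j) * φ2.w j) * (eps φ1 j x - eps φ2 j x) := by
  have E1 := eps_key φ1 j x h1.ne
  have E2 := eps_key φ2 j x h2.ne'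
  rw [← Finset.sum_erase_add _ _ (Finset.mem_univ j)]
  have hj : (red j φ1 φ2).w j = 0 := by simp [red]
  rw [hj, zero_mul, add_zero]
  have hterm : ∀ k ∈ Finset.univ.erase j,
      (red j φ1 φ2).w k * x k
        = |φ2.w j| * (φ1.w k * x k) + |φ1.w j| * (φ2.w k * x k) := by
    intro k hk
    have : k ≠ j := (Finset.mem_erase.mp hk).1
    simp only [red, if_neg this]
    ring
  rw [Finset.sum_congr rfl hterm, Finset.sum_add_distrib, ← Finset.mul_sum, ← Finset.mul_sum]
  have hb : (red j φ1 φ2).b = φ1.b * |φ2.w j| + φ2.b * |φ1.w j| := rfl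
  rw [hb, abs_of_pos h2, abs_of_neg h1]
  nlinarith [E1, E2]

lemma red_strict {j : Fin D} {φ1 φ2 : LinConstr D} (hs1 : φ1.strict = false)
    (hs2 : φ2.strict = false) : (red j φ1 φ2).strict = false := by
  simp [red, hs1, hs2]

lemma red_sat_iff {j : Fin D} {φ1 φ2 : LinConstr D} (hs1 : φ1.strict = false)
    (hs2 : φ2.strict = false) (h1 : φ1.w j < 0) (h2 : 0 < φ2.w j) (x : Fin D → ℝ) :
    (red j φ1 φ2).Sat x ↔ eps φ2 j x ≤ eps φ1 j x := by
  rw [sat_nonstrict (red_strict hs1 hs2), red_val h1 h2]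
  have hc : 0 < (-φ1.w j) * φ2.w j := mul_pos (by linarith) h2
  constructor
  · intro hh; nlinarith
  · intro hh; nlinarith

lemma mem_negSet {j : Fin D} {S : Set (LinConstr D)} {φ : LinConstr D} :
    φ ∈ negSet j S ↔ φ ∈ S ∧ φ.w j < 0 := Iff.rfl

lemma mem_posSet {j : Fin D} {S : Set (LinConstr D)} {φ : LinConstr D} :
    φ ∈ posSet j S ↔ φ ∈ S ∧ 0 < φ.w j := Iff.rfl

lemma elim_sound {j : Fin D} {S : Set (LinConstr D)} (hns : ∀ φ ∈ S, φ.strict = false)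
    {x : Fin D → ℝ} (h : SatSet S x) : SatSet (elim j S) x := by
  rintro ψ (hψ | ⟨φ1, hφ1, φ2, hφ2, rfl⟩)
  · exact h ψ hψ.1
  · rw [red_sat_iff (hns _ hφ1.1) (hns _ hφ2.1) hφ1.2 hφ2.2]
    have a1 := (sat_iff_ge (hns _ hφ1.1) hφ1.2 x).mp (h _ hφ1.1)
    have a2 := (sat_iff_le (hns _ hφ2.1) hφ2.2 x).mp (h _ hφ2.1)
    linarith

lemma elim_nonstrict {j : Fin D} {S : Set (LinConstr D)} (hns : ∀ φ ∈ S, φ.strict = false) :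
    ∀ φ ∈ elim j S, φ.strict = false := by
  rintro ψ (hψ | ⟨φ1, hφ1, φ2, hφ2, rfl⟩)
  · exact hns _ hψ.1
  · exact red_strict (hns _ hφ1.1) (hns _ hφ2.1)

lemma elim_finite {j : Fin D} {S : Set (LinConstr D)} (h : S.Finite) : (elim j S).Finite := by
  apply Set.Finite.union
  · exact h.subset Set.diff_subset
  · have : {ψ | ∃ φ1 ∈ negSet j S, ∃ φ2 ∈ posSet j S, ψ = red j φ1 φ2}
        ⊆ Set.image2 (red j) (negSet j S) (posSet j S) := by
      rintro ψ ⟨φ1, h1, φ2, h2, rfl⟩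
      exact ⟨φ1, h1, φ2, h2, rfl⟩
    exact Set.Finite.subset (Set.Finite.image2 _ (h.subset fun φ hφ => hφ.1)
      (h.subset fun φ hφ => hφ.1)) this

lemma piAt_induction (Γ' : Set (LinConstr D)) (P : Set (LinConstr D) → Prop)
    (hΓ : P Γ') (hstep : ∀ (j : Fin D) (S : Set (LinConstr D)), P S → P (elim j S)) :
    ∀ i, P (PiAt Γ' i) := by
  have key : ∀ n i, D ≤ i + n → P (PiAt Γ' i) := by
    intro n
    induction n with
    | zero => intro i hi; rw [PiAt, dif_neg (by omega)]; exact hΓ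
    | succ n ih =>
      intro i hi
      rw [PiAt]
      split
      · exact hstep _ _ (ih (i + 1) (by omega))
      · exact hΓ
  intro i; exact key D i (by omega)

lemma piAt_w_zero (Γ' : Set (LinConstr D)) :
    ∀ i, ∀ φ ∈ PiAt Γ' i, ∀ k : Fin D, i < (k : ℕ) → φ.w k = 0 := by
  have key : ∀ n i, D ≤ i + n → ∀ φ ∈ PiAt Γ' i, ∀ k : Fin D, i < (k : ℕ) → φ.w k = 0 := by
    intro n
    induction n with
    | zero =>
      intro i hi φ _ k hk
      exact absurd k.2 (by omega)
    | succ n ih =>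
      intro i hi φ hφ k hk
      rw [PiAt] at hφ
      split at hφ
      case isTrue h =>
        rcases hφ with hφ | ⟨φ1, hφ1, φ2, hφ2, rfl⟩
        · rcases Nat.lt_or_ge (i + 1) (k : ℕ) with hk' | hk'
          · exact ih (i + 1) (by omega) φ hφ.1 k hk'
          · have hkj : k = (⟨i + 1, h⟩ : Fin D) := by
              apply Fin.ext; simp; omega
            have := hφ.2
            rw [Set.mem_union] at this
            push_neg at this
            rw [hkj]
            rcases lt_trichotomy (φ.w ⟨i + 1, h⟩) 0 with h0 | h0 | h0
            · exact absurd ⟨hφ.1, h0⟩ this.1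
            · exact h0
            · exact absurd ⟨hφ.1, h0⟩ this.2
        · by_cases hkj : k = (⟨i + 1, h⟩ : Fin D)
          · simp [red, hkj]
          · have hk1 : i + 1 < (k : ℕ) := by
              rcases Nat.lt_or_ge (i + 1) (k : ℕ) with h' | h'
              · exact h'
              · exact absurd (Fin.ext (by omega : (k : ℕ) = i + 1)) hkj
            have z1 := ih (i + 1) (by omega) φ1 hφ1.1 k hk1
            have z2 := ih (i + 1) (by omega) φ2 hφ2.1 k hk1
            simp [red, hkj, z1, z2]
      case isFalse h => exact absurd k.2 (by omega)
  intro i; exact key D i (by omega)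

lemma eps_congr {φ : LinConstr D} {j : Fin D} {x y : Fin D → ℝ}
    (h : ∀ k, k ≠ j → φ.w k ≠ 0 → x k = y k) : eps φ j x = eps φ j y := by
  unfold eps
  congr 1
  congr 1
  refine Finset.sum_congr rfl fun k hk => ?_
  by_cases hw : φ.w k = 0
  · simp [hw]
  · rw [h k (Finset.mem_erase.mp hk).1 hw]

lemma sat_congr {φ : LinConstr D} {x y : Fin D → ℝ}
    (h : ∀ k, φ.w k ≠ 0 → x k = y k) : φ.Sat x ↔ φ.Sat y := by
  have hsum : (∑ k, φ.w k * x k) = ∑ k, φ.w k * y k := by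
    refine Finset.sum_congr rfl fun k _ => ?_
    by_cases hw : φ.w k = 0
    · simp [hw]
    · rw [h k hw]
  unfold Sat
  rw [hsum]

lemma red_sat_of {j : Fin D} {φ1 φ2 : LinConstr D} (hs1 : φ1.strict = false)
    (hs2 : φ2.strict = false) (h1 : φ1.w j < 0) (h2 : 0 < φ2.w j) {x : Fin D → ℝ}
    (s1 : φ1.Sat x) (s2 : φ2.Sat x) : (red j φ1 φ2).Sat x := by
  rw [red_sat_iff hs1 hs2 h1 h2]
  have a1 := (sat_iff_ge hs1 h1 x).mp s1
  have a2 := (sat_iff_le hs2 h2 x).mp s2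
  linarith


lemma lbE_ne_top {S : Set (LinConstr D)} {i : Fin D} {x : Fin D → ℝ}
    (h : (posSet i S).Finite) : lbE S i x ≠ ⊤ := by
  unfold lbE
  rcases Set.eq_empty_or_nonempty ((fun φ => ((eps φ i x : ℝ) : EReal)) '' posSet i S) with he | hne
  · rw [he, sSup_empty]; exact bot_ne_top
  · have hmem := hne.csSup_mem (h.image _)
    rcases hmem with ⟨φ, _, hval⟩
    rw [← hval]
    exact EReal.coe_ne_top _

lemma ubE_ne_bot {S : Set (LinConstr D)} {i : Fin D} {x : Fin D → ℝ}
    (h : (negSet i S).Finite) : ubE S i x ≠ ⊥ := by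
  unfold ubE
  rcases Set.eq_empty_or_nonempty ((fun φ => ((eps φ i x : ℝ) : EReal)) '' negSet i S) with he | hne
  · rw [he, sInf_empty]; exact top_ne_bot
  · have hmem := hne.csInf_mem (h.image _)
    rcases hmem with ⟨φ, _, hval⟩
    rw [← hval]
    exact EReal.coe_ne_bot _

lemma lbE_le {S : Set (LinConstr D)} {i : Fin D} {x : Fin D → ℝ} {φ : LinConstr D}
    (h : φ ∈ posSet i S) : ((eps φ i x : ℝ) : EReal) ≤ lbE S i x :=
  le_sSup ⟨φ, h, rfl⟩

lemma ubE_le {S : Set (LinConstr D)} {i : Fin D} {x : Fin D → ℝ} {φ : LinConstr D}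
    (h : φ ∈ negSet i S) : ubE S i x ≤ ((eps φ i x : ℝ) : EReal) :=
  sInf_le ⟨φ, h, rfl⟩

lemma lbE_le_ubE {S : Set (LinConstr D)} {i : Fin D} {x : Fin D → ℝ}
    (h : ∀ φ1 ∈ negSet i S, ∀ φ2 ∈ posSet i S, eps φ2 i x ≤ eps φ1 i x) :
    lbE S i x ≤ ubE S i x := by
  apply sSup_le
  rintro _ ⟨φ2, hφ2, rfl⟩
  apply le_sInf
  rintro _ ⟨φ1, hφ1, rfl⟩
  simp only []
  exact_mod_cast h φ1 hφ1 φ2 hφ2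

lemma clampE (lb ub : EReal) (hlu : lb ≤ ub) (hlt : lb ≠ ⊤) (hub : ub ≠ ⊥) (t : ℝ) :
    ∃ zr : ℝ, min (max (t : EReal) lb) ub = (zr : ℝ) ∧
      lb ≤ (zr : ℝ) ∧ ((zr : ℝ) : EReal) ≤ ub ∧
      ∀ r : ℝ, lb ≤ (r : ℝ) → ((r : ℝ) : EReal) ≤ ub → r ≠ zr → |zr - t| < |r - t| := by
  by_cases h1 : (t : EReal) < lb
  · -- clamp to lb
    have hlbot : lb ≠ ⊥ := fun h => by simp [h] at h1
    obtain ⟨l, hl⟩ : ∃ l : ℝ, lb = (l : ℝ) := ⟨lb.toReal, (EReal.coe_toReal hlt hlbot).symm⟩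
    refine ⟨l, ?_, ?_, ?_, ?_⟩
    · rw [max_eq_right h1.le, min_eq_left hlu, hl]
    · rw [hl]
    · rw [← hl]; exact hlu
    · intro r hr _ hne
      rw [hl] at h1 hr
      have htl : t < l := by exact_mod_cast h1
      have hlr : l ≤ r := by exact_mod_cast hr
      have hlr' : l < r := lt_of_le_of_ne hlr (fun h => hne h.symm)
      rw [abs_of_pos (by linarith), abs_of_pos (by linarith)]
      linarith
  · push_neg at h1
    by_cases h2 : ub < (t : EReal)
    · -- clamp to ub
      have hutop : ub ≠ ⊤ := fun h => by simp [h] at h2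
      obtain ⟨u, hu⟩ : ∃ u : ℝ, ub = (u : ℝ) := ⟨ub.toReal, (EReal.coe_toReal hutop hub).symm⟩
      refine ⟨u, ?_, ?_, ?_, ?_⟩
      · rw [max_eq_left h1, min_eq_right h2.le, hu]
      · rw [← hu]; exact hlu
      · rw [hu]
      · intro r _ hr hne
        rw [hu] at h2 hr
        have hut : u < t := by exact_mod_cast h2
        have hru : r ≤ u := by exact_mod_cast hr
        have hru' : r < u := lt_of_le_of_ne hru hne
        rw [abs_of_neg (by linarith), abs_of_neg (by linarith)]
        linarith
    · push_neg at h2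
      refine ⟨t, ?_, h1, h2, ?_⟩
      · rw [max_eq_left h1, min_eq_left h2]
      · intro r _ _ hne
        rw [sub_self, abs_zero]
        simpa [sub_eq_zero] using hne

lemma piGe_nonstrict (Γ : Set (LinConstr D)) : ∀ φ ∈ PiGe Γ, φ.strict = false := by
  rintro _ ⟨φ, _, rfl⟩
  rfl

lemma satSet_piGe {Γ : Set (LinConstr D)} {x : Fin D → ℝ} (h : SatSet Γ x) :
    SatSet (PiGe Γ) x := by
  rintro _ ⟨φ, hφ, rfl⟩
  have := h φ hφ
  unfold Sat toGe at *
  simp only [if_false, Bool.false_eq_true]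
  split at this
  · exact le_of_lt this
  · exact this

lemma piAt_succ (Γ' : Set (LinConstr D)) (i : ℕ) (h : i + 1 < D) :
    PiAt Γ' i = elim ⟨i + 1, h⟩ (PiAt Γ' (i + 1)) := by
  rw [PiAt, dif_pos h]

lemma clns_eq (Γ' : Set (LinConstr D)) (xt : Fin D → ℝ) (i : ℕ) (hi : i < D) :
    CLns Γ' xt ⟨i, hi⟩ = (min (max ((xt ⟨i, hi⟩ : ℝ) : EReal)
        (lbE (PiAt Γ' i) ⟨i, hi⟩ (CLns Γ' xt)))
      (ubE (PiAt Γ' i) ⟨i, hi⟩ (CLns Γ' xt))).toReal := by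
  have heps : ∀ φ ∈ PiAt Γ' i,
      eps φ ⟨i, hi⟩ (fun k => if h : (k : ℕ) < ((⟨i, hi⟩ : Fin D) : ℕ) then CLns Γ' xt k else 0)
        = eps φ ⟨i, hi⟩ (CLns Γ' xt) := by
    intro φ hφ
    apply eps_congr
    intro k hk hw
    have hk1 : ¬ (i < (k : ℕ)) := fun h => hw (piAt_w_zero Γ' i φ hφ k h)
    have hk2 : (k : ℕ) < i := by
      rcases Nat.lt_or_ge (k : ℕ) i with h | h
      · exact h
      · exact absurd (Fin.ext (by omega : (k : ℕ) = i)) hk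
    rw [dif_pos hk2]
  rw [CLns]
  have hL : lbE (PiAt Γ' ((⟨i, hi⟩ : Fin D) : ℕ)) ⟨i, hi⟩
      (fun k => if h : (k : ℕ) < ((⟨i, hi⟩ : Fin D) : ℕ) then CLns Γ' xt k else 0)
      = lbE (PiAt Γ' i) ⟨i, hi⟩ (CLns Γ' xt) := by
    unfold lbE
    congr 1
    apply Set.image_congr
    intro φ hφ
    rw [heps φ hφ.1]
  have hU : ubE (PiAt Γ' ((⟨i, hi⟩ : Fin D) : ℕ)) ⟨i, hi⟩
      (fun k => if h : (k : ℕ) < ((⟨i, hi⟩ : Fin D) : ℕ) then CLns Γ' xt k else 0)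
      = ubE (PiAt Γ' i) ⟨i, hi⟩ (CLns Γ' xt) := by
    unfold ubE
    congr 1
    apply Set.image_congr
    intro φ hφ
    rw [heps φ hφ.1]
  rw [hL, hU]

lemma core (Γ' : Set (LinConstr D)) (hfin : Γ'.Finite)
    (hns : ∀ φ ∈ Γ', φ.strict = false) {xs : Fin D → ℝ} (hsat : SatSet Γ' xs)
    (xt : Fin D → ℝ) :
    ∀ i : ℕ, ∀ hi : i < D,
      (∀ φ ∈ PiAt Γ' i, φ.Sat (CLns Γ' xt)) ∧
      (∀ r : ℝ, lbE (PiAt Γ' i) ⟨i, hi⟩ (CLns Γ' xt) ≤ ((r : ℝ) : EReal) →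
        ((r : ℝ) : EReal) ≤ ubE (PiAt Γ' i) ⟨i, hi⟩ (CLns Γ' xt) →
        r ≠ CLns Γ' xt ⟨i, hi⟩ →
        |CLns Γ' xt ⟨i, hi⟩ - xt ⟨i, hi⟩| < |r - xt ⟨i, hi⟩|) := by
  have hPns : ∀ i, ∀ φ ∈ PiAt Γ' i, φ.strict = false :=
    piAt_induction Γ' (fun S => ∀ φ ∈ S, φ.strict = false) hns fun j S h => elim_nonstrict h
  have hPfin : ∀ i, (PiAt Γ' i).Finite :=
    piAt_induction Γ' (fun S => S.Finite) hfin fun j S h => elim_finite h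
  have hPsat : ∀ i, SatSet (PiAt Γ' i) xs := fun i =>
    (piAt_induction Γ' (fun S => (∀ φ ∈ S, φ.strict = false) ∧ SatSet S xs)
      ⟨hns, hsat⟩ (fun j S h => ⟨elim_nonstrict h.1, elim_sound h.1 h.2⟩) i).2
  intro i
  induction i using Nat.strong_induction_on with
  | _ i ih =>
  intro hi
  -- the reductions and the w_i = 0 constraints at level i are satisfied by z
  have hred_zero :
      (∀ φ1 ∈ negSet ⟨i, hi⟩ (PiAt Γ' i), ∀ φ2 ∈ posSet ⟨i, hi⟩ (PiAt Γ' i),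
        (red ⟨i, hi⟩ φ1 φ2).Sat (CLns Γ' xt)) ∧
      (∀ φ ∈ PiAt Γ' i, φ.w ⟨i, hi⟩ = 0 → φ.Sat (CLns Γ' xt)) := by
    rcases Nat.eq_zero_or_pos i with h0 | hpos
    · subst h0
      constructor
      · intro φ1 h1 φ2 h2
        have hr : (red ⟨0, hi⟩ φ1 φ2).Sat xs :=
          red_sat_of (hPns 0 _ h1.1) (hPns 0 _ h2.1) h1.2 h2.2
            (hPsat 0 _ h1.1) (hPsat 0 _ h2.1)
        refine (sat_congr fun k hk => absurd ?_ hk).mpr hr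
        by_cases hkj : k = ⟨0, hi⟩
        · simp [red, hkj]
        · have hkpos : (0 : ℕ) < (k : ℕ) := by
            rcases Nat.eq_zero_or_pos (k : ℕ) with h | h
            · exact absurd (Fin.ext h) hkj
            · exact h
          simp [red, hkj, piAt_w_zero Γ' 0 φ1 h1.1 k hkpos,
            piAt_w_zero Γ' 0 φ2 h2.1 k hkpos]
      · intro φ hφ hw0
        refine (sat_congr fun k hk => absurd ?_ hk).mpr (hPsat 0 φ hφ)
        by_cases hkj : k = ⟨0, hi⟩
        · rw [hkj]; exact hw0
        · have hkpos : (0 : ℕ) < (k : ℕ) := by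
            rcases Nat.eq_zero_or_pos (k : ℕ) with h | h
            · exact absurd (Fin.ext h) hkj
            · exact h
          exact piAt_w_zero Γ' 0 φ hφ k hkpos
    · obtain ⟨m, rfl⟩ : ∃ m, i = m + 1 := ⟨i - 1, by omega⟩
      have hstep : PiAt Γ' m = elim ⟨m + 1, hi⟩ (PiAt Γ' (m + 1)) := piAt_succ Γ' m hi
      have hm := (ih m (by omega) (by omega)).1
      rw [hstep] at hm
      constructor
      · intro φ1 h1 φ2 h2
        exact hm _ (Set.mem_union_right _ ⟨φ1, h1, φ2, h2, rfl⟩)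
      · intro φ hφ hw0
        refine hm _ (Set.mem_union_left _ ⟨hφ, ?_⟩)
        rintro (h | h)
        · have := h.2; rw [hw0] at this; exact lt_irrefl _ this
        · have := h.2; rw [hw0] at this; exact lt_irrefl _ this
  have hlu : lbE (PiAt Γ' i) ⟨i, hi⟩ (CLns Γ' xt) ≤ ubE (PiAt Γ' i) ⟨i, hi⟩ (CLns Γ' xt) :=
    lbE_le_ubE fun φ1 h1 φ2 h2 =>
      (red_sat_iff (hPns i _ h1.1) (hPns i _ h2.1) h1.2 h2.2 _).mp
        (hred_zero.1 φ1 h1 φ2 h2)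
  obtain ⟨zr, hm, hlb, hub, hclose⟩ := clampE _ _ hlu
    (lbE_ne_top ((hPfin i).subset fun φ h => h.1))
    (ubE_ne_bot ((hPfin i).subset fun φ h => h.1)) (xt ⟨i, hi⟩)
  have hzj : CLns Γ' xt ⟨i, hi⟩ = zr := by
    rw [clns_eq Γ' xt i hi, hm, EReal.toReal_coe]
  constructor
  · intro φ hφ
    rcases lt_trichotomy (φ.w ⟨i, hi⟩) 0 with hw | hw | hw
    · rw [sat_iff_ge (hPns i _ hφ) hw]
      have h1 : ((zr : ℝ) : EReal) ≤ ((eps φ ⟨i, hi⟩ (CLns Γ' xt) : ℝ) : EReal) :=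
        le_trans hub (ubE_le ⟨hφ, hw⟩)
      rw [hzj]
      exact_mod_cast h1
    · exact hred_zero.2 φ hφ hw
    · rw [sat_iff_le (hPns i _ hφ) hw]
      have h1 : ((eps φ ⟨i, hi⟩ (CLns Γ' xt) : ℝ) : EReal) ≤ ((zr : ℝ) : EReal) :=
        le_trans (lbE_le ⟨hφ, hw⟩) hlb
      rw [hzj]
      exact_mod_cast h1
  · intro r hr1 hr2 hne
    rw [hzj] at hne ⊢
    exact hclose r hr1 hr2 hne

end LinConstr

/-- Lemma A.1 of the paper. If `Γ` is a satisfiable finite set of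
linear constraints, then `CL^≥(x̃)` (the layer built from `Γ^≥`) is optimal for `x̃`
with respect to `Γ^≥`; in particular, for every coordinate `i` there is no point `x'`
satisfying `Γ^≥` that agrees with `CL^≥(x̃)` on all earlier coordinates and is strictly
closer to `x̃` at coordinate `i`. -/
theorem clge_optimal {D : ℕ} (Γ : Set (LinConstr D)) (hfin : Γ.Finite)
    (hsat : ∃ x : Fin D → ℝ, SatSet Γ x) (xt : Fin D → ℝ) :
    Optimal (PiGe Γ) xt (CLns (PiGe Γ) xt) ∧
      ∀ i : Fin D, ¬ ∃ x' : Fin D → ℝ, SatSet (PiGe Γ) x' ∧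
        (∀ j : Fin D, (j : ℕ) < (i : ℕ) → x' j = CLns (PiGe Γ) xt j) ∧
        |x' i - xt i| < |CLns (PiGe Γ) xt i - xt i| := by
  classical
  obtain ⟨xs, hxs⟩ := hsat
  have hns' : ∀ φ ∈ PiGe Γ, φ.strict = false := piGe_nonstrict Γ
  have hfin' : (PiGe Γ).Finite := hfin.image _
  have hsat' : SatSet (PiGe Γ) xs := satSet_piGe hxs
  have hcore := core (PiGe Γ) hfin' hns' hsat' xt
  have hPns : ∀ i, ∀ φ ∈ PiAt (PiGe Γ) i, φ.strict = false :=
    piAt_induction (PiGe Γ) (fun S => ∀ φ ∈ S, φ.strict = false) hns'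
      fun j S h => elim_nonstrict h
  have hPsatx : ∀ (x' : Fin D → ℝ), SatSet (PiGe Γ) x' → ∀ i, SatSet (PiAt (PiGe Γ) i) x' :=
    fun x' hx' i => (piAt_induction (PiGe Γ)
      (fun S => (∀ φ ∈ S, φ.strict = false) ∧ SatSet S x') ⟨hns', hx'⟩
      (fun j S h => ⟨elim_nonstrict h.1, elim_sound h.1 h.2⟩) i).2
  have hsatz : SatSet (PiGe Γ) (CLns (PiGe Γ) xt) := by
    rcases Nat.eq_zero_or_pos D with hD | hD
    · intro φ hφ
      refine (sat_congr fun k _ => ?_).mpr (hsat' φ hφ)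
      exact absurd k.2 (by omega)
    · have h1 := (hcore (D - 1) (by omega)).1
      have hEq : PiAt (PiGe Γ) (D - 1) = PiGe Γ := by rw [PiAt, dif_neg (by omega)]
      rw [hEq] at h1
      exact h1
  have hkey : ∀ (i : Fin D) (x' : Fin D → ℝ), SatSet (PiGe Γ) x' →
      (∀ k : Fin D, (k : ℕ) < (i : ℕ) → x' k = CLns (PiGe Γ) xt k) →
      x' i ≠ CLns (PiGe Γ) xt i →
      |CLns (PiGe Γ) xt i - xt i| < |x' i - xt i| := by
    intro i x' hx' hagree hne
    have hsi := hPsatx x' hx' i.1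
    have heps : ∀ φ ∈ PiAt (PiGe Γ) i.1, eps φ i (CLns (PiGe Γ) xt) = eps φ i x' := by
      intro φ hφ
      apply eps_congr
      intro k hk hw
      have hk1 : ¬ ((i : ℕ) < (k : ℕ)) := fun h => hw (piAt_w_zero _ i.1 φ hφ k h)
      have hk2 : (k : ℕ) < (i : ℕ) := by
        rcases Nat.lt_or_ge (k : ℕ) (i : ℕ) with h | h
        · exact h
        · exact absurd (Fin.ext (by omega)) hk
      exact (hagree k hk2).symm
    have hb1 : lbE (PiAt (PiGe Γ) i.1) i (CLns (PiGe Γ) xt) ≤ ((x' i : ℝ) : EReal) := by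
      apply sSup_le
      rintro _ ⟨φ, hφ, rfl⟩
      show ((eps φ i (CLns (PiGe Γ) xt) : ℝ) : EReal) ≤ ((x' i : ℝ) : EReal)
      have h1 := (sat_iff_le (hPns i.1 _ hφ.1) hφ.2 x').mp (hsi φ hφ.1)
      rw [heps φ hφ.1]
      exact_mod_cast h1
    have hb2 : ((x' i : ℝ) : EReal) ≤ ubE (PiAt (PiGe Γ) i.1) i (CLns (PiGe Γ) xt) := by
      apply le_sInf
      rintro _ ⟨φ, hφ, rfl⟩
      show ((x' i : ℝ) : EReal) ≤ ((eps φ i (CLns (PiGe Γ) xt) : ℝ) : EReal)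
      have h1 := (sat_iff_ge (hPns i.1 _ hφ.1) hφ.2 x').mp (hsi φ hφ.1)
      rw [heps φ hφ.1]
      exact_mod_cast h1
    exact (hcore i.1 i.2).2 (x' i) hb1 hb2 hne
  refine ⟨⟨hsatz, ?_⟩, ?_⟩
  · rintro ⟨x', hne, hx', hle⟩
    have hex : ∃ n : ℕ, ∃ h : n < D, x' ⟨n, h⟩ ≠ CLns (PiGe Γ) xt ⟨n, h⟩ := by
      rcases Function.ne_iff.mp hne with ⟨i, hi⟩
      exact ⟨i.1, i.2, hi⟩
    obtain ⟨hn, hnne⟩ := Nat.find_spec hex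
    have hmin : ∀ k : Fin D, (k : ℕ) < Nat.find hex → x' k = CLns (PiGe Γ) xt k := by
      intro k hk
      by_contra h
      exact Nat.find_min hex hk ⟨k.2, h⟩
    have h1 := hkey ⟨Nat.find hex, hn⟩ x' hx' hmin hnne
    have h2 := hle ⟨Nat.find hex, hn⟩
    linarith
  · rintro i ⟨x', hx', hagree, hlt⟩
    by_cases hne : x' i = CLns (PiGe Γ) xt i
    · rw [hne] at hlt; exact lt_irrefl _ hlt
    · have := hkey i x' hx' hagree hne
      linarith
end

section
/- Let φ¹ and φ² be linear constraints over ℝ^D such that, for some index j, the variable x_j appears negatively in φ¹ (w¹_j < 0) and positively in φ² (w²_j > 0). Then a point x ∈ ℝ^D satisfies red_j(φ¹, φ²) if and only if ε^{φ¹}_j(x) − ε^{φ²}_j(x) ⊵ 0, where ⊵ is ≥ if both φ¹ and φ² are non-strict, and ⊵ is > if at least one of φ¹, φ² is strict. -/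
open scoped BigOperators

open LinConstr

/-- If `x_j` appears negatively in `φ1` and positively in `φ2`, then
`x` satisfies `red_j(φ1, φ2)` iff `ε^{φ1}_j(x) − ε^{φ2}_j(x) ⊵ 0`, where `⊵` is `≥`
when both constraints are non-strict and `>` when at least one of them is strict. -/
theorem red_sat_iff {D : ℕ} (j : Fin D) (φ1 φ2 : LinConstr D)
    (h1 : φ1.w j < 0) (h2 : 0 < φ2.w j) (x : Fin D → ℝ) :
    (red j φ1 φ2).Sat x ↔
      (if φ1.strict || φ2.strict then 0 < eps φ1 j x - eps φ2 j x
       else 0 ≤ eps φ1 j x - eps φ2 j x) := by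

  have hw1 : φ1.w j ≠ 0 := ne_of_lt h1
  have hw2 : φ2.w j ≠ 0 := ne_of_gt h2
  have hpos : (0:ℝ) < (-φ1.w j) * φ2.w j := mul_pos (by linarith) h2
  have key : (∑ k, (red j φ1 φ2).w k * x k) + (red j φ1 φ2).b
      = (eps φ1 j x - eps φ2 j x) * ((-φ1.w j) * φ2.w j) := by
    have hsum : (∑ k, (red j φ1 φ2).w k * x k)
        = ∑ k ∈ Finset.univ.erase j, (φ1.w k * |φ2.w j| + φ2.w k * |φ1.w j|) * x k := by
      rw [← Finset.add_sum_erase _ _ (Finset.mem_univ j)]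
      have hz : (red j φ1 φ2).w j = 0 := by simp [red]
      rw [hz, zero_mul, zero_add]
      exact Finset.sum_congr rfl (fun k hk => by
        simp [red, Finset.ne_of_mem_erase hk])
    rw [hsum]
    simp only [red, eps, abs_of_pos h2, abs_of_neg h1]
    rw [Finset.sum_congr rfl (fun k _ => add_mul (φ1.w k * φ2.w j) (φ2.w k * (-φ1.w j)) (x k)),
      Finset.sum_add_distrib]
    have e1 : (∑ k ∈ Finset.univ.erase j, (φ1.w k / φ1.w j) * x k)
        = (∑ k ∈ Finset.univ.erase j, φ1.w k * x k) / φ1.w j := by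
      rw [Finset.sum_div]; exact Finset.sum_congr rfl (fun k _ => by ring)
    have e2 : (∑ k ∈ Finset.univ.erase j, (φ2.w k / φ2.w j) * x k)
        = (∑ k ∈ Finset.univ.erase j, φ2.w k * x k) / φ2.w j := by
      rw [Finset.sum_div]; exact Finset.sum_congr rfl (fun k _ => by ring)
    have e3 : (∑ k ∈ Finset.univ.erase j, φ1.w k * φ2.w j * x k)
        = (∑ k ∈ Finset.univ.erase j, φ1.w k * x k) * φ2.w j := by
      rw [Finset.sum_mul]; exact Finset.sum_congr rfl (fun k _ => by ring)
    have e4 : (∑ k ∈ Finset.univ.erase j, φ2.w k * (-φ1.w j) * x k)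
        = (∑ k ∈ Finset.univ.erase j, φ2.w k * x k) * (-φ1.w j) := by
      rw [Finset.sum_mul]; exact Finset.sum_congr rfl (fun k _ => by ring)
    rw [e1, e2, e3, e4]
    field_simp
    ring
  have hst : (red j φ1 φ2).strict = (φ1.strict || φ2.strict) := rfl
  unfold Sat
  rw [hst, key]
  split
  · constructor
    · intro h; nlinarith
    · intro h; exact mul_pos h hpos
  · constructor
    · intro h; nlinarith
    · intro h; exact mul_nonneg h (le_of_lt hpos)
end

section
/- Let Π' be a finite set of linear constraints over ℝ^D, let j be an index, let Π'⁻ (resp. Π'⁺) be the set of constraints of Π' in which x_j appears negatively (resp. positively), and let Π'' = (Π' \ (Π'⁻ ∪ Π'⁺)) ∪ {red_j(φ¹, φ²) : φ¹ ∈ Π'⁻, φ² ∈ Π'⁺} be the set obtained by eliminating x_j. Then for every x ∈ ℝ^D: x satisfies Π'' if and only if there exists v ∈ ℝ such that the point obtained from x by replacing its j-th coordinate with v satisfies Π'. -/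
open scoped BigOperators

open LinConstr

section Aux

open Finset

variable {D : ℕ}

/-- Split the weighted sum at the updated coordinate. -/
lemma sum_upd (w : Fin D → ℝ) (j : Fin D) (x : Fin D → ℝ) (v : ℝ) :
    ∑ k, w k * Function.update x j v k
      = (∑ k ∈ Finset.univ.erase j, w k * x k) + w j * v := by
  rw [← Finset.sum_erase_add _ _ (Finset.mem_univ j), Function.update_self]
  congr 1
  refine Finset.sum_congr rfl fun k hk => ?_
  rw [Function.update_of_ne (Finset.ne_of_mem_erase hk)]

lemma eps_eq' (φ : LinConstr D) (j : Fin D) (x : Fin D → ℝ) :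
    eps φ j x = (-((∑ k ∈ Finset.univ.erase j, φ.w k * x k) + φ.b)) / φ.w j := by
  unfold eps
  have : ∑ k ∈ Finset.univ.erase j, (φ.w k / φ.w j) * x k
      = (∑ k ∈ Finset.univ.erase j, φ.w k * x k) / φ.w j := by
    rw [Finset.sum_div]
    exact Finset.sum_congr rfl fun k _ => by ring
  rw [this]; ring

/-- Satisfaction at `update x j v` for negative `w j`. -/
lemma neg_sat (φ : LinConstr D) (j : Fin D) (x : Fin D → ℝ) (v : ℝ) (hw : φ.w j < 0) :
    φ.Sat (Function.update x j v) ↔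
      (if φ.strict then v < eps φ j x else v ≤ eps φ j x) := by
  rw [Sat, sum_upd, eps_eq']
  cases hs : φ.strict with
  | true =>
      simp only [hs, reduceIte, Bool.false_eq_true, if_false, eq_self_iff_true, if_true]
      rw [lt_div_iff_of_neg hw]
      constructor <;> intro h <;> nlinarith
  | false =>
      simp only [hs, reduceIte, Bool.false_eq_true, if_false, eq_self_iff_true, if_true]
      rw [le_div_iff_of_neg hw]
      constructor <;> intro h <;> nlinarith

/-- Satisfaction at `update x j v` for positive `w j`. -/
lemma pos_sat (φ : LinConstr D) (j : Fin D) (x : Fin D → ℝ) (v : ℝ) (hw : 0 < φ.w j) :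
    φ.Sat (Function.update x j v) ↔
      (if φ.strict then eps φ j x < v else eps φ j x ≤ v) := by
  rw [Sat, sum_upd, eps_eq']
  cases hs : φ.strict with
  | true =>
      simp only [hs, reduceIte, Bool.false_eq_true, if_false, eq_self_iff_true, if_true]
      rw [div_lt_iff₀ hw]
      constructor <;> intro h <;> nlinarith
  | false =>
      simp only [hs, reduceIte, Bool.false_eq_true, if_false, eq_self_iff_true, if_true]
      rw [div_le_iff₀ hw]
      constructor <;> intro h <;> nlinarith

/-- Satisfaction is independent of the `j`-th coordinate when `w j = 0`. -/
lemma zero_sat (φ : LinConstr D) (j : Fin D) (x : Fin D → ℝ) (v : ℝ) (hw : φ.w j = 0) :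
    φ.Sat (Function.update x j v) ↔ φ.Sat x := by
  have hx : ∑ k, φ.w k * x k = (∑ k ∈ Finset.univ.erase j, φ.w k * x k) + φ.w j * x j :=
    (Finset.sum_erase_add _ _ (Finset.mem_univ j)).symm
  rw [Sat, Sat, sum_upd, hx, hw]
  simp

/-- Characterization of satisfaction of the reduction. -/
lemma red_sat (φ1 φ2 : LinConstr D) (j : Fin D) (x : Fin D → ℝ)
    (hw1 : φ1.w j < 0) (hw2 : 0 < φ2.w j) :
    (red j φ1 φ2).Sat x ↔
      (if φ1.strict || φ2.strict then eps φ2 j x < eps φ1 j x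
       else eps φ2 j x ≤ eps φ1 j x) := by
  set A1 := (∑ k ∈ Finset.univ.erase j, φ1.w k * x k) + φ1.b with hA1
  set A2 := (∑ k ∈ Finset.univ.erase j, φ2.w k * x k) + φ2.b with hA2
  have hwj : (red j φ1 φ2).w j = 0 := by simp [red]
  have hwk : ∀ k ∈ Finset.univ.erase j,
      (red j φ1 φ2).w k = φ1.w k * |φ2.w j| + φ2.w k * |φ1.w j| := by
    intro k hk
    simp [red, Finset.ne_of_mem_erase hk]
  have hb : (red j φ1 φ2).b = φ1.b * |φ2.w j| + φ2.b * |φ1.w j| := rfl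
  have hval : (∑ k, (red j φ1 φ2).w k * x k) + (red j φ1 φ2).b
      = φ2.w j * A1 + (-(φ1.w j)) * A2 := by
    have hsum : ∑ k, (red j φ1 φ2).w k * x k
        = ∑ k ∈ Finset.univ.erase j, (φ1.w k * |φ2.w j| + φ2.w k * |φ1.w j|) * x k := by
      rw [← Finset.sum_erase_add _ _ (Finset.mem_univ j), hwj, zero_mul, add_zero]
      exact Finset.sum_congr rfl fun k hk => by rw [hwk k hk]
    rw [hsum, hb, abs_of_pos hw2, abs_of_neg hw1, hA1, hA2]
    rw [Finset.sum_congr rfl (fun k _ => by ring :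
      ∀ k ∈ Finset.univ.erase j,
        (φ1.w k * φ2.w j + φ2.w k * -φ1.w j) * x k
          = φ2.w j * (φ1.w k * x k) + (-(φ1.w j)) * (φ2.w k * x k))]
    rw [Finset.sum_add_distrib, ← Finset.mul_sum, ← Finset.mul_sum]
    ring
  have he1 : eps φ1 j x * φ1.w j = -A1 := by
    rw [eps_eq', div_mul_cancel₀]; exact ne_of_lt hw1
  have he2 : eps φ2 j x * φ2.w j = -A2 := by
    rw [eps_eq', div_mul_cancel₀]; exact ne_of_gt hw2
  have hid : φ2.w j * A1 + (-(φ1.w j)) * A2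
      = (φ2.w j * (-(φ1.w j))) * (eps φ1 j x - eps φ2 j x) := by
    linear_combination (φ2.w j) * he1 + (-(φ1.w j)) * he2
  have hc : 0 < φ2.w j * (-(φ1.w j)) := mul_pos hw2 (by linarith)
  rw [Sat, hval, hid]
  have hstrict : (red j φ1 φ2).strict = (φ1.strict || φ2.strict) := rfl
  rw [hstrict]
  cases h12 : (φ1.strict || φ2.strict) with
  | true =>
      simp only [h12, reduceIte, Bool.false_eq_true, if_false, eq_self_iff_true, if_true]
      constructor
      · intro h; nlinarith
      · intro h; nlinarith
  | false =>
      simp only [h12, reduceIte, Bool.false_eq_true, if_false, eq_self_iff_true, if_true]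
      constructor
      · intro h; nlinarith
      · intro h; nlinarith

/-- Finite separation lemma: given finitely many (possibly strict) lower
bounds `P` and upper bounds `N` that are pairwise compatible, a value `v`
satisfying all of them exists. -/
lemma exists_sep {α : Type*} (P N : Finset α) (f : α → ℝ) (s : α → Bool)
    (h : ∀ p ∈ P, ∀ q ∈ N, if s p || s q then f p < f q else f p ≤ f q) :
    ∃ v : ℝ, (∀ p ∈ P, if s p then f p < v else f p ≤ v) ∧
      (∀ q ∈ N, if s q then v < f q else v ≤ f q) := by
  rcases P.eq_empty_or_nonempty with rfl | hP
  · rcases N.eq_empty_or_nonempty with rfl | hN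
    · exact ⟨0, by simp, by simp⟩
    · refine ⟨N.inf' hN f - 1, by simp, fun q hq => ?_⟩
      have := Finset.inf'_le f hq
      split <;> linarith
  · rcases N.eq_empty_or_nonempty with rfl | hN
    · refine ⟨P.sup' hP f + 1, fun p hp => ?_, by simp⟩
      have := Finset.le_sup' f hp
      split <;> linarith
    · obtain ⟨q0, hq0, hq0e⟩ := Finset.exists_mem_eq_inf' hN f
      obtain ⟨p0, hp0, hp0e⟩ := Finset.exists_mem_eq_sup' hP f
      refine ⟨(P.sup' hP f + N.inf' hN f) / 2, fun p hp => ?_, fun q hq => ?_⟩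
      · have h1 : f p ≤ P.sup' hP f := Finset.le_sup' f hp
        have h2 := h p hp q0 hq0
        cases hsp : s p with
        | true =>
            rw [hsp] at h2; simp only [Bool.true_or, if_true] at h2
            simp only [eq_self_iff_true, if_true]
            rw [hq0e]; linarith [hq0e ▸ h2]
        | false =>
            have h2' : f p ≤ f q0 := by
              rw [hsp] at h2
              cases hsq : s q0 <;> rw [hsq] at h2 <;> simp at h2 <;> linarith
            simp only [Bool.false_eq_true, if_false]
            linarith [hq0e ▸ h2']
      · have h1 : N.inf' hN f ≤ f q := Finset.inf'_le f hq
        have h2 := h p0 hp0 q hq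
        cases hsq : s q with
        | true =>
            rw [hsq] at h2; simp only [Bool.or_true, if_true] at h2
            simp only [eq_self_iff_true, if_true]
            linarith [hp0e ▸ h2]
        | false =>
            have h2' : f p0 ≤ f q := by
              rw [hsq] at h2
              cases hsp : s p0 <;> rw [hsp] at h2 <;> simp at h2 <;> linarith
            simp only [Bool.false_eq_true, if_false]
            linarith [hp0e ▸ h2']

end Aux


/-- Fourier–Motzkin elimination is exact. For a finite set `Γ'` of
linear constraints and the set `elim j Γ'` obtained by eliminating `x_j`, a point `x`
satisfies `elim j Γ'` iff its `j`-th coordinate can be replaced by some `v ∈ ℝ` so that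
the resulting point satisfies `Γ'`. -/
theorem elim_sat_iff {D : ℕ} (Γ' : Set (LinConstr D)) (hfin : Γ'.Finite)
    (j : Fin D) (x : Fin D → ℝ) :
    SatSet (elim j Γ') x ↔ ∃ v : ℝ, SatSet Γ' (Function.update x j v) := by
  constructor
  · rintro hsat
    -- collect pos/neg constraints into finsets
    have hfp : (posSet j Γ').Finite := hfin.subset fun φ hφ => hφ.1
    have hfn : (negSet j Γ').Finite := hfin.subset fun φ hφ => hφ.1
    have hpair : ∀ p ∈ hfp.toFinset, ∀ q ∈ hfn.toFinset,
        if p.strict || q.strict then eps p j x < eps q j x else eps p j x ≤ eps q j x := by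
      intro p hp q hq
      rw [Set.Finite.mem_toFinset] at hp hq
      have hred : (red j q p) ∈ elim j Γ' := Or.inr ⟨q, hq, p, hp, rfl⟩
      have := (red_sat q p j x hq.2 hp.2).mp (hsat _ hred)
      rwa [Bool.or_comm] at this
    obtain ⟨v, hvp, hvn⟩ := exists_sep hfp.toFinset hfn.toFinset
      (fun φ => eps φ j x) (fun φ => φ.strict) hpair
    refine ⟨v, fun φ hφ => ?_⟩
    rcases lt_trichotomy (φ.w j) 0 with hw | hw | hw
    · have hm : φ ∈ negSet j Γ' := ⟨hφ, hw⟩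
      have h' := hvn φ (hfn.mem_toFinset.mpr hm)
      rw [neg_sat φ j x v hw]
      exact h'
    · have hm : φ ∈ elim j Γ' := Or.inl ⟨hφ, by
        rintro (⟨-, h⟩ | ⟨-, h⟩) <;> simp [hw] at h⟩
      exact (zero_sat φ j x v hw).mpr (hsat _ hm)
    · have hm : φ ∈ posSet j Γ' := ⟨hφ, hw⟩
      have h' := hvp φ (hfp.mem_toFinset.mpr hm)
      rw [pos_sat φ j x v hw]
      exact h'
  · rintro ⟨v, hv⟩ φ hφ
    rcases hφ with ⟨hφ, hnm⟩ | ⟨φ1, h1, φ2, h2, rfl⟩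
    · have hw : φ.w j = 0 := by
        by_contra h
        rcases lt_or_gt_of_ne h with h' | h'
        · exact hnm (Or.inl ⟨hφ, h'⟩)
        · exact hnm (Or.inr ⟨hφ, h'⟩)
      exact (zero_sat φ j x v hw).mp (hv φ hφ)
    · have hv1 := (neg_sat φ1 j x v h1.2).mp (hv φ1 h1.1)
      have hv2 := (pos_sat φ2 j x v h2.2).mp (hv φ2 h2.1)
      rw [red_sat φ1 φ2 j x h1.2 h2.2]
      cases hs1 : φ1.strict <;> cases hs2 : φ2.strict <;>
        simp only [hs1, hs2, Bool.or_self, Bool.false_or, Bool.or_false, Bool.true_or,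
          Bool.or_true, if_true, if_false, Bool.false_eq_true, eq_self_iff_true] at hv1 hv2 ⊢ <;>
        linarith
end
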